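/- Define the q-numerical radius ω_q(T) = sup{|⟨Tx, y⟩| : ‖x‖ = ‖y‖ = 1, ⟨x, y⟩ = q} for q ∈ [0,1]. Then ω_q(T) ≤ √(q²·w(T)² + (1 - q² + q√(1-q²))·‖T‖²), where w(T) is the classical numerical radius. -/

import Mathlib

/-!
Fix unit vectors `x, y` with `⟪x, y⟫ = q` and split `T x` and `y` along `x` and `x^⊥`:
`T x = α x + v` with `α = ⟪x, T x⟫`, and `y = q x + z` with `‖z‖ = √(1 - q²)`. Then
`|⟪T x, y⟫| ≤ q |α| + ‖v‖ ‖z‖`, where `|α| ≤ w(T)` and `|α|² + ‖v‖² ≤ ‖T‖²`; bounding the cross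
term `2 q ‖z‖ |α| ‖v‖` by `q ‖z‖ (|α|² + ‖v‖²)` gives the estimate.
-/

open scoped InnerProductSpace

section UnitVector

variable {𝕜 E : Type*} [RCLike 𝕜] [NormedAddCommGroup E] [InnerProductSpace 𝕜 E]
  {x : E}

theorem inner_sub_inner_smul_eq_zero (hx : ‖x‖ = 1) (u : E) :
    ⟪x, u - ⟪x, u⟫_𝕜 • x⟫_𝕜 = 0 := by
  rw [inner_sub_right, inner_smul_right, inner_self_eq_norm_sq_to_K, hx]
  simp

theorem norm_inner_sq_add_norm_sub_sq (hx : ‖x‖ = 1) (u : E) :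
    ‖⟪x, u⟫_𝕜‖ ^ 2 + ‖u - ⟪x, u⟫_𝕜 • x‖ ^ 2 = ‖u‖ ^ 2 := by
  have hperp : ⟪⟪x, u⟫_𝕜 • x, u - ⟪x, u⟫_𝕜 • x⟫_𝕜 = 0 := by
    rw [inner_smul_left, inner_sub_inner_smul_eq_zero hx, mul_zero]
  have h := norm_add_sq_eq_norm_sq_add_norm_sq_of_inner_eq_zero _ _ hperp
  rw [add_sub_cancel, norm_smul, hx, mul_one] at h
  simpa only [sq] using h.symm

theorem inner_eq_inner_mul_inner_add_inner_sub (hx : ‖x‖ = 1) (u y : E) :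
    ⟪u, y⟫_𝕜 = ⟪u, x⟫_𝕜 * ⟪x, y⟫_𝕜 + ⟪u - ⟪x, u⟫_𝕜 • x, y - ⟪x, y⟫_𝕜 • x⟫_𝕜 := by
  have hxx : ⟪x, x⟫_𝕜 = 1 := by
    rw [inner_self_eq_norm_sq_to_K, hx]; simp
  simp only [inner_sub_left, inner_sub_right, inner_smul_left, inner_smul_right, hxx,
    inner_conj_symm]
  ring

theorem norm_inner_le_of_norm_eq_one (hx : ‖x‖ = 1) (u y : E) :
    ‖⟪u, y⟫_𝕜‖ ≤ ‖⟪x, y⟫_𝕜‖ * ‖⟪x, u⟫_𝕜‖ + ‖y - ⟪x, y⟫_𝕜 • x‖ * ‖u - ⟪x, u⟫_𝕜 • x‖ := by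
  rw [inner_eq_inner_mul_inner_add_inner_sub hx u y, ← inner_conj_symm x u, mul_comm ‖y - _‖]
  refine (norm_add_le _ _).trans (add_le_add ?_ (norm_inner_le_norm _ _))
  rw [norm_mul, RCLike.norm_conj, mul_comm]

end UnitVector

theorem sq_mul_add_mul_le {a b q s W N : ℝ} (ha : 0 ≤ a) (haW : a ≤ W)
    (habN : a ^ 2 + b ^ 2 ≤ N ^ 2) (hq : 0 ≤ q) (hs : 0 ≤ s) :
    (q * a + s * b) ^ 2 ≤ q ^ 2 * W ^ 2 + (s ^ 2 + q * s) * N ^ 2 := by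
  have hcross : 2 * a * b ≤ a ^ 2 + b ^ 2 := by nlinarith [sq_nonneg (a - b)]
  have hqs : 0 ≤ q * s := mul_nonneg hq hs
  nlinarith [mul_le_mul haW haW ha (ha.trans haW), mul_le_mul_of_nonneg_left hcross hqs,
    mul_le_mul_of_nonneg_left habN hqs, mul_le_mul_of_nonneg_left habN (sq_nonneg s),
    mul_nonneg (sq_nonneg s) (sq_nonneg a), sq_nonneg q]

theorem bddAbove_norm_inner_apply_self {𝕜 E : Type*} [RCLike 𝕜] [NormedAddCommGroup E]
    [InnerProductSpace 𝕜 E] (T : E →L[𝕜] E) :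
    BddAbove {r : ℝ | ∃ x : E, ‖x‖ = 1 ∧ r = ‖⟪T x, x⟫_𝕜‖} := by
  refine ⟨‖T‖, ?_⟩
  rintro r ⟨x, hx, rfl⟩
  calc ‖⟪T x, x⟫_𝕜‖ ≤ ‖T x‖ * ‖x‖ := norm_inner_le_norm _ _
    _ ≤ ‖T‖ * ‖x‖ * ‖x‖ := by gcongr; exact T.le_opNorm x
    _ = ‖T‖ := by rw [hx]; ring

theorem stmt_5_general {H : Type*} [NormedAddCommGroup H] [InnerProductSpace ℂ H]
    (T : H →L[ℂ] H) (q : ℝ) (hq0 : 0 ≤ q) :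
    sSup {r : ℝ | ∃ x y : H, ‖x‖ = 1 ∧ ‖y‖ = 1 ∧ (inner ℂ x y : ℂ) = (q : ℂ) ∧
        r = ‖(inner ℂ (T x) y : ℂ)‖} ≤
      Real.sqrt (q ^ 2 * (sSup {r : ℝ | ∃ x : H, ‖x‖ = 1 ∧ r = ‖(inner ℂ (T x) x : ℂ)‖}) ^ 2 +
        (1 - q ^ 2 + q * Real.sqrt (1 - q ^ 2)) * ‖T‖ ^ 2) := by
  refine Real.sSup_le ?_ (Real.sqrt_nonneg _)
  rintro r ⟨x, y, hx, hy, hxy, rfl⟩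
  set α : ℂ := ⟪x, T x⟫_ℂ
  have hαW : ‖α‖ ≤ sSup {r : ℝ | ∃ x : H, ‖x‖ = 1 ∧ r = ‖⟪T x, x⟫_ℂ‖} :=
    (norm_inner_symm _ _).trans_le (le_csSup (bddAbove_norm_inner_apply_self T) ⟨x, hx, rfl⟩)
  have hTx : ‖α‖ ^ 2 + ‖T x - α • x‖ ^ 2 ≤ ‖T‖ ^ 2 := by
    rw [norm_inner_sq_add_norm_sub_sq hx]
    gcongr
    simpa [hx] using T.le_opNorm x
  have hyz := norm_inner_sq_add_norm_sub_sq (𝕜 := ℂ) hx y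
  rw [hxy, hy, Complex.norm_real, Real.norm_of_nonneg hq0, one_pow] at hyz
  have hz2 : ‖y - (q : ℂ) • x‖ ^ 2 = 1 - q ^ 2 := by linarith
  have hz : Real.sqrt (1 - q ^ 2) = ‖y - (q : ℂ) • x‖ := by
    rw [← hz2, Real.sqrt_sq (norm_nonneg _)]
  have hbound := norm_inner_le_of_norm_eq_one (𝕜 := ℂ) hx (T x) y
  rw [hxy, Complex.norm_real, Real.norm_of_nonneg hq0] at hbound
  rw [hz, ← hz2]
  refine Real.le_sqrt_of_sq_le ((pow_le_pow_left₀ (norm_nonneg _) hbound 2).trans ?_)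
  exact sq_mul_add_mul_le (norm_nonneg α) hαW hTx hq0 (norm_nonneg _)

theorem stmt_5 {H : Type*} [NormedAddCommGroup H] [InnerProductSpace ℂ H] [CompleteSpace H]
    (hdim : 2 ≤ Module.rank ℂ H)
    (T : H →L[ℂ] H) (q : ℝ) (hq0 : 0 ≤ q) (hq1 : q ≤ 1) :
    sSup {r : ℝ | ∃ x y : H, ‖x‖ = 1 ∧ ‖y‖ = 1 ∧ (inner ℂ x y : ℂ) = (q : ℂ) ∧
        r = ‖(inner ℂ (T x) y : ℂ)‖} ≤
      Real.sqrt (q ^ 2 * (sSup {r : ℝ | ∃ x : H, ‖x‖ = 1 ∧ r = ‖(inner ℂ (T x) x : ℂ)‖}) ^ 2 +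
        (1 - q ^ 2 + q * Real.sqrt (1 - q ^ 2)) * ‖T‖ ^ 2) :=
  stmt_5_general T q hq0
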